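/- There are never three consecutive negative terms in the infinity series: for all n, at least one of s(n), s(n+1), s(n+2) is ≥ 0. -/
import Mathlib


def s : ℕ → ℤ
  | 0 => 0
  | n + 1 =>
    if (n + 1) % 2 = 0 then -s ((n + 1) / 2)
    else s (n / 2) + 1
decreasing_by all_goals omega

lemma s_succ (n : ℕ) : s (n+1) = if (n+1)%2 = 0 then -s ((n+1)/2) else s (n/2) + 1 := by
  rw [s]

lemma s_even (k : ℕ) (hk : 1 ≤ k) : s (2*k) = - s k := by
  obtain ⟨m, rfl⟩ : ∃ m, k = m + 1 := ⟨k - 1, by omega⟩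
  have h : 2*(m+1) = (2*m+1) + 1 := by ring
  rw [h, s_succ]
  have h1 : (2*m+1+1) % 2 = 0 := by omega
  have h2 : (2*m+1+1) / 2 = m + 1 := by omega
  simp [h1, h2]

lemma s_odd (k : ℕ) : s (2*k+1) = s k + 1 := by
  rw [s_succ]
  have h1 : (2*k+1) % 2 ≠ 0 := by omega
  have h2 : (2*k) / 2 = k := by omega
  simp [h1, h2]

theorem stmt15 (n : ℕ) : 0 ≤ s n ∨ 0 ≤ s (n + 1) ∨ 0 ≤ s (n + 2) := by
  by_contra h
  push_neg at h
  obtain ⟨h0, h1, h2⟩ := h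
  rcases Nat.even_or_odd n with ⟨k, hk⟩ | ⟨k, hk⟩
  · -- n = 2k
    subst hk
    rcases Nat.eq_zero_or_pos k with rfl | hkpos
    · simp [s] at h0
    · rw [← two_mul, s_even k hkpos] at h0
      have := s_odd k
      rw [← two_mul] at h1
      rw [this] at h1
      omega
  · -- n = 2k+1
    subst hk
    have e1 : 2*k+1+1 = 2*(k+1) := by ring
    have e2 : 2*k+1+2 = 2*(k+1)+1 := by ring
    rw [e1, s_even (k+1) (by omega)] at h1
    rw [e2, s_odd (k+1)] at h2
    omega
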